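/- For every k = 0,…,n_0−1, the restriction of the fine-grid Hartley basis vectors satisfies R·h¹_k = 2c_k·h⁰_k and R·h¹_{n_0+k} = −2c_{n_0+k}·h⁰_k. -/
import Mathlib

open Matrix Real

/-- The cell-centered Hartley matrix `H(n)` with entries
`H(n)_{j,k} = cos(2(j+1/2)kπ/n) + sin(2(j+1/2)kπ/n)`. -/
noncomputable def hartley (n : ℕ) : Matrix (Fin n) (Fin n) ℝ :=
  fun j k =>
    Real.cos (2 * ((j.val : ℝ) + 1/2) * (k.val : ℝ) * Real.pi / n) +
    Real.sin (2 * ((j.val : ℝ) + 1/2) * (k.val : ℝ) * Real.pi / n)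

/-- The prolongation matrix `P ∈ ℝ^{2n₀ × n₀}` with `P_{2j,k} = P_{2j+1,k} = δ_{j,k}`.
The restriction matrix is `R = Pᵀ`. -/
def prolong (n₀ : ℕ) : Matrix (Fin (2 * n₀)) (Fin n₀) ℝ :=
  fun j k => if j.val / 2 = k.val then 1 else 0

/-- The damping coefficient `c_k = cos(kπ/(2n₀))`. -/
noncomputable def cc (n₀ k : ℕ) : ℝ := Real.cos (k * Real.pi / (2 * n₀))

lemma cas_sum (θ δ : ℝ) :
    (Real.cos (θ - δ) + Real.sin (θ - δ)) + (Real.cos (θ + δ) + Real.sin (θ + δ))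
      = 2 * Real.cos δ * (Real.cos θ + Real.sin θ) := by
  rw [Real.cos_sub, Real.cos_add, Real.sin_sub, Real.sin_add]; ring

lemma cas_shift (x : ℝ) (j : ℕ) :
    Real.cos (x + (2 * j + 1) * Real.pi) + Real.sin (x + (2 * j + 1) * Real.pi)
      = -(Real.cos x + Real.sin x) := by
  have h : x + (2 * j + 1) * Real.pi = (x + Real.pi) + (j : ℤ) * (2 * Real.pi) := by
    push_cast; ring
  rw [h, Real.cos_add_int_mul_two_pi, Real.sin_add_int_mul_two_pi,
    Real.cos_add_pi, Real.sin_add_pi]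
  ring

lemma sum_pair_aux (n₀ : ℕ) (j : Fin n₀) (f : Fin (2 * n₀) → ℝ) :
    ∑ i : Fin (2 * n₀), (if i.val / 2 = j.val then (1:ℝ) else 0) * f i
      = f ⟨2 * j.val, by omega⟩ + f ⟨2 * j.val + 1, by omega⟩ := by
  have hset : (Finset.univ.filter (fun i : Fin (2 * n₀) => i.val / 2 = j.val))
      = {⟨2 * j.val, by omega⟩, ⟨2 * j.val + 1, by omega⟩} := by
    ext i
    simp [Fin.ext_iff]
    omega
  have h1 : ∑ i : Fin (2 * n₀), (if i.val / 2 = j.val then (1:ℝ) else 0) * f i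
      = ∑ i ∈ Finset.univ.filter (fun i : Fin (2 * n₀) => i.val / 2 = j.val), f i := by
    rw [Finset.sum_filter]
    exact Finset.sum_congr rfl (fun i _ => by rw [ite_mul, one_mul, zero_mul])
  rw [h1, hset, Finset.sum_pair (by simp [Fin.ext_iff])]

/-- Restriction of fine-grid Hartley basis vectors:
`R·h¹_k = 2c_k·h⁰_k` and `R·h¹_{n₀+k} = −2c_{n₀+k}·h⁰_k` for `k = 0,…,n₀−1`. -/
theorem restrict_hartley (n₀ : ℕ) (hn : 1 ≤ n₀) (k : Fin n₀) :
    (prolong n₀)ᵀ.mulVec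
        (fun j => hartley (2 * n₀) j ⟨k.val, by have := k.isLt; omega⟩) =
      (2 * cc n₀ k.val) • (fun j => hartley n₀ j k) ∧
    (prolong n₀)ᵀ.mulVec
        (fun j => hartley (2 * n₀) j ⟨n₀ + k.val, by have := k.isLt; omega⟩) =
      (-(2 * cc n₀ (n₀ + k.val))) • (fun j => hartley n₀ j k) := by
  have hN : (n₀ : ℝ) ≠ 0 := Nat.cast_ne_zero.mpr (by omega)
  constructor
  · funext j
    simp only [mulVec, dotProduct, transpose_apply, prolong, Pi.smul_apply, smul_eq_mul]
    rw [sum_pair_aux n₀ j]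
    simp only [hartley, cc]
    push_cast
    set δ : ℝ := (k : ℝ) * Real.pi / (2 * n₀) with hδ
    have e1 : 2 * ((2 * (j:ℝ) + 1/2)) * (k:ℝ) * Real.pi / (2 * n₀)
        = (4 * (j:ℝ) + 2) * δ - δ := by rw [hδ]; field_simp; ring
    have e2 : 2 * ((2 * (j:ℝ) + 1 + 1/2)) * (k:ℝ) * Real.pi / (2 * n₀)
        = (4 * (j:ℝ) + 2) * δ + δ := by rw [hδ]; field_simp; ring
    have e3 : 2 * ((j:ℝ) + 1/2) * (k:ℝ) * Real.pi / n₀ = (4 * (j:ℝ) + 2) * δ := by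
      rw [hδ]; field_simp; ring
    rw [e1, e2, e3, cas_sum]
  · funext j
    simp only [mulVec, dotProduct, transpose_apply, prolong, Pi.smul_apply, smul_eq_mul]
    rw [sum_pair_aux n₀ j]
    simp only [hartley, cc]
    push_cast
    set δ : ℝ := ((n₀ : ℝ) + k) * Real.pi / (2 * n₀) with hδ
    have e1 : 2 * ((2 * (j:ℝ) + 1/2)) * ((n₀:ℝ) + k) * Real.pi / (2 * n₀)
        = (4 * (j:ℝ) + 2) * δ - δ := by rw [hδ]; field_simp; ring
    have e2 : 2 * ((2 * (j:ℝ) + 1 + 1/2)) * ((n₀:ℝ) + k) * Real.pi / (2 * n₀)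
        = (4 * (j:ℝ) + 2) * δ + δ := by rw [hδ]; field_simp; ring
    have e3 : (4 * (j:ℝ) + 2) * δ
        = 2 * ((j:ℝ) + 1/2) * (k:ℝ) * Real.pi / n₀ + (2 * (j:ℕ) + 1) * Real.pi := by
      rw [hδ]; field_simp; ring
    rw [e1, e2, cas_sum, e3, cas_shift]
    ring
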